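/- arXiv:2007.00077 — 2 statements merged into one kernel-verified Lean document; each statement's English description precedes it below -/
import Mathlib

section
/- Let (ρ_r)_{r∈ℕ} be a sequence of nonnegative reals, let δ > 0, ε̄ > 0 with ε̄ ≤ 2δ, and suppose ρ_0 = γ and for every r: if ρ_r ≥ 2δ then ρ_{r+1} ≤ ρ_r − δ, and if ρ_r < 2δ then ρ_{r+1} ≤ ρ_r/2. Then the number of indices r with ρ_r > ε̄ is at most γ/δ + log₂(2δ/ε̄). -/
lemma logb_two_le_self_of_lt_two {x : ℝ} (hx : 0 < x) (hx2 : x < 2) :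
    Real.logb 2 x ≤ x := by
  have hlog2 : (0.6931471803 : ℝ) < Real.log 2 := Real.log_two_gt_d9
  have h1 : Real.log x ≤ x - 1 := Real.log_le_sub_one_of_pos hx
  have h2 : x - 1 ≤ x * Real.log 2 := by nlinarith
  rw [Real.logb, div_le_iff₀ (by linarith)]
  linarith

theorem stmt6 (ρ : ℕ → ℝ) (δ εbar γ : ℝ)
    (hρ : ∀ r, 0 ≤ ρ r) (hδ : 0 < δ) (hεbar : 0 < εbar) (hεδ : εbar ≤ 2 * δ)
    (h0 : ρ 0 = γ)
    (hfar : ∀ r, ρ r ≥ 2 * δ → ρ (r + 1) ≤ ρ r - δ)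
    (hnear : ∀ r, ρ r < 2 * δ → ρ (r + 1) ≤ ρ r / 2) :
    {r : ℕ | ρ r > εbar}.Finite ∧
    (Nat.card {r : ℕ | ρ r > εbar} : ℝ) ≤ γ / δ + Real.logb 2 (2 * δ / εbar) := by
  set L := Real.logb 2 (2 * δ / εbar) with hL
  have hLnn : 0 ≤ L := Real.logb_nonneg (by norm_num)
    ((one_le_div hεbar).2 hεδ)
  -- linear phase
  have lin : ∀ i : ℕ, (∀ m < i, 2 * δ ≤ ρ m) → ρ i ≤ γ - i * δ := by
    intro i
    induction i with
    | zero => intro _; simp [h0]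
    | succ n ih =>
      intro h
      have h1 : ρ n ≤ γ - n * δ := ih fun m hm => h m (hm.trans (Nat.lt_succ_self n))
      have h2 : ρ (n + 1) ≤ ρ n - δ := hfar n (h n (Nat.lt_succ_self n))
      push_cast
      linarith
  -- halving phase
  have half : ∀ k j : ℕ, ρ k < 2 * δ → ρ (k + j) ≤ ρ k / 2 ^ j := by
    intro k j hk
    induction j with
    | zero => simp
    | succ n ih =>
      have hpow : (1 : ℝ) ≤ 2 ^ n := one_le_pow₀ (by norm_num)
      have hlt : ρ (k + n) < 2 * δ := by
        calc ρ (k + n) ≤ ρ k / 2 ^ n := ih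
          _ ≤ ρ k := by
            rw [div_le_iff₀ (by positivity)]
            nlinarith [hρ k]
          _ < 2 * δ := hk
      have := hnear (k + n) hlt
      have : ρ (k + n + 1) ≤ ρ k / 2 ^ n / 2 := by linarith
      calc ρ (k + (n + 1)) = ρ (k + n + 1) := by ring_nf
        _ ≤ ρ k / 2 ^ n / 2 := this
        _ = ρ k / 2 ^ (n + 1) := by ring
  -- key bound on bad indices
  have key : ∀ r : ℕ, εbar < ρ r → (r : ℝ) + 1 ≤ γ / δ + L := by
    intro r hr
    by_cases h : ∃ k, k ≤ r ∧ ρ k < 2 * δ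
    · -- find least such k
      have hex : ∃ k, ρ k < 2 * δ := ⟨h.choose, h.choose_spec.2⟩
      set k := Nat.find hex with hkdef
      have hk : ρ k < 2 * δ := Nat.find_spec hex
      have hkmin : ∀ m < k, 2 * δ ≤ ρ m := fun m hm =>
        le_of_not_gt (Nat.find_min hex hm)
      have hkr : k ≤ r := (Nat.find_le h.choose_spec.2).trans h.choose_spec.1
      set j := r - k with hj
      have hrkj : r = k + j := by omega
      have hhalf : ρ r ≤ ρ k / 2 ^ j := hrkj ▸ half k j hk
      have hpowpos : (0 : ℝ) < 2 ^ j := by positivity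
      have hεj : εbar * 2 ^ j < ρ k := by
        rw [← lt_div_iff₀ hpowpos] at *
        linarith
      rcases Nat.eq_zero_or_pos k with hk0 | hkpos
      · -- k = 0 : γ < 2δ
        rw [hk0] at hk hεj hrkj
        have hγ : ρ 0 = γ := h0
        have hγlt : γ < 2 * δ := hγ ▸ hk
        have hγpos : 0 < γ := by nlinarith [hεj, hγ ▸ hεj]
        have hjle : (j : ℝ) ≤ Real.logb 2 (γ / εbar) := by
          have h2j : (2 : ℝ) ^ j < γ / εbar := by
            rw [lt_div_iff₀ hεbar]; nlinarith [hγ ▸ hεj]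
          calc (j : ℝ) = Real.logb 2 (2 ^ j) := by
                rw [Real.logb_pow, Real.logb_self_eq_one (by norm_num)]
                ring
            _ ≤ Real.logb 2 (γ / εbar) :=
                Real.logb_le_logb_of_le (by norm_num) (by positivity) h2j.le
        have hsplit : Real.logb 2 (γ / εbar) + 1 = Real.logb 2 (γ / δ) + L := by
          rw [hL, Real.logb_div (ne_of_gt hγpos) (ne_of_gt hεbar),
            Real.logb_div (ne_of_gt hγpos) (ne_of_gt hδ),
            Real.logb_div (by positivity) (ne_of_gt hεbar),
            Real.logb_mul (by norm_num) (ne_of_gt hδ),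
            Real.logb_self_eq_one (by norm_num)]
          ring
        have hlog : Real.logb 2 (γ / δ) ≤ γ / δ :=
          logb_two_le_self_of_lt_two (by positivity)
            ((div_lt_iff₀ hδ).2 (by linarith))
        have : (r : ℝ) = j := by rw [hrkj]; push_cast; ring
        rw [this]
        linarith
      · -- k ≥ 1
        have hk1 : k - 1 < k := Nat.sub_lt hkpos one_pos
        have hlin : ρ (k - 1) ≤ γ - (k - 1 : ℕ) * δ :=
          lin (k - 1) fun m hm => hkmin m (hm.trans hk1)
        have hge : 2 * δ ≤ ρ (k - 1) := hkmin (k - 1) hk1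
        have hkcast : ((k - 1 : ℕ) : ℝ) = (k : ℝ) - 1 := by
          rw [Nat.cast_sub hkpos]; norm_num
        have hkle : (k : ℝ) ≤ γ / δ - 1 := by
          rw [hkcast] at hlin
          have h' : ((k : ℝ) + 1) * δ ≤ γ := by nlinarith
          have := (le_div_iff₀ hδ).2 h'
          linarith
        have hjle : (j : ℝ) ≤ L := by
          have h2j : (2 : ℝ) ^ j < 2 * δ / εbar := by
            rw [lt_div_iff₀ hεbar]; nlinarith
          calc (j : ℝ) = Real.logb 2 (2 ^ j) := by
                rw [Real.logb_pow, Real.logb_self_eq_one (by norm_num)]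
                ring
            _ ≤ L := Real.logb_le_logb_of_le (by norm_num) (by positivity) h2j.le
        have : (r : ℝ) = (k : ℝ) + j := by rw [hrkj]; push_cast; ring
        rw [this]
        linarith
    · push_neg at h
      have hall : ∀ m < r, 2 * δ ≤ ρ m := fun m hm => h m hm.le
      have h1 : ρ r ≤ γ - r * δ := lin r hall
      have h2 : 2 * δ ≤ ρ r := h r le_rfl
      have : (r : ℝ) + 2 ≤ γ / δ := by
        rw [le_div_iff₀ hδ]; nlinarith
      linarith
  -- conclude
  have hbound : 0 ≤ γ / δ + L := by
    have : 0 ≤ γ / δ := div_nonneg (h0 ▸ hρ 0) hδ.le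
    linarith
  set m := Nat.floor (γ / δ + L) with hm
  have hsub : {r : ℕ | ρ r > εbar} ⊆ Set.Iio m := by
    intro r hr
    have := key r hr
    have : (r : ℝ) + 1 ≤ m := by
      have h1 : (r : ℕ) + 1 ≤ m := by
        rw [hm, Nat.le_floor_iff hbound]
        push_cast
        linarith
      exact_mod_cast h1
    simp only [Set.mem_Iio]
    by_contra hc
    push_neg at hc
    have : (m : ℝ) ≤ r := by exact_mod_cast hc
    linarith
  have hfin : {r : ℕ | ρ r > εbar}.Finite := (Set.finite_Iio m).subset hsub
  refine ⟨hfin, ?_⟩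
  have hcard : Nat.card {r : ℕ | ρ r > εbar} ≤ Nat.card (Set.Iio m) :=
    Nat.card_mono (Set.finite_Iio m) hsub
  have hIio : Nat.card (Set.Iio m) = m := by
    simp [Nat.card_eq_card_toFinset]
  rw [hIio] at hcard
  calc (Nat.card {r : ℕ | ρ r > εbar} : ℝ) ≤ (m : ℝ) := by exact_mod_cast hcard
    _ ≤ γ / δ + L := Nat.floor_le hbound
end

section
/- Let w* ∈ R^d be a unit vector, let z₁, …, z_{d−1} ∈ R^d satisfy |w*·z_i| ≤ ε̄ for all i, let ŵ be a unit vector orthogonal to every z_i, and suppose the matrix Z = [z₁ ⋯ z_{d−1}] has smallest singular value σ_{d−1}(Z) ≥ σ > 0. Then (w*·ŵ)² ≥ 1 − √d · ε̄ / σ. -/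
open scoped RealInnerProductSpace

/-!
The vector `v = w* - (w*·ŵ) ŵ` is orthogonal to `ŵ`. The `z_i` are linearly independent (their
smallest singular value is positive), so they span the hyperplane `ŵ^⊥` and `v = Σ β_i z_i`.
Then `1 - (w*·ŵ)² = w*·v = Σ β_i (w*·z_i) ≤ ‖β‖₁ ε̄ ≤ √(d-1) ‖β‖₂ ε̄`, and
`σ ‖β‖₂ ≤ ‖v‖ ≤ 1`.
-/

open Module Submodule

section

variable {ι : Type*} [Fintype ι]

theorem EuclideanSpace.sum_abs_le_sqrt_card_mul_norm (β : EuclideanSpace ℝ ι) :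
    ∑ i, |β i| ≤ √(Fintype.card ι) * ‖β‖ := by
  have hsq : (∑ i, |β i|) ^ 2 ≤ Fintype.card ι * ‖β‖ ^ 2 := by
    rw [EuclideanSpace.norm_sq_eq]
    simpa using sq_sum_le_card_mul_sum_sq (s := Finset.univ) (f := fun i => |β i|)
  calc ∑ i, |β i| = √((∑ i, |β i|) ^ 2) := (Real.sqrt_sq (by positivity)).symm
    _ ≤ √(Fintype.card ι * ‖β‖ ^ 2) := Real.sqrt_le_sqrt hsq
    _ = √(Fintype.card ι) * ‖β‖ := by
      rw [Real.sqrt_mul (Nat.cast_nonneg _), Real.sqrt_sq (norm_nonneg _)]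

variable {E : Type*} [NormedAddCommGroup E] [InnerProductSpace ℝ E]

theorem linearIndependent_of_mul_norm_le_norm_sum {z : ι → E} {σ : ℝ} (hσ₀ : 0 < σ)
    (hσ : ∀ β : EuclideanSpace ℝ ι, σ * ‖β‖ ≤ ‖∑ i, β i • z i‖) : LinearIndependent ℝ z := by
  rw [Fintype.linearIndependent_iff]
  intro g hg
  have h := hσ (WithLp.toLp 2 g)
  simp only [hg, norm_zero] at h
  have h0 : WithLp.toLp 2 g = (0 : EuclideanSpace ℝ ι) :=
    norm_le_zero_iff.mp (nonpos_of_mul_nonpos_right h hσ₀)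
  exact fun i => congrFun (congrArg WithLp.ofLp h0) i

theorem span_range_eq_orthogonal_span_singleton [FiniteDimensional ℝ E] {z : ι → E} {u : E}
    (hz : LinearIndependent ℝ z) (hcard : Fintype.card ι + 1 = finrank ℝ E) (hu : u ≠ 0)
    (horth : ∀ i, ⟪z i, u⟫ = 0) : span ℝ (Set.range z) = (ℝ ∙ u)ᗮ := by
  refine eq_of_le_of_finrank_eq ?_ ?_
  · rw [span_le, Set.range_subset_iff]
    exact fun i => mem_orthogonal_singleton_iff_inner_left.mpr (horth i)
  · rw [finrank_span_eq_card hz]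
    exact (finrank_add_finrank_orthogonal' (by rw [finrank_span_singleton hu, add_comm, hcard])).symm

theorem inner_sum_smul_le_sum_abs_mul {w : E} {z : ι → E} {ε : ℝ}
    (hz : ∀ i, |⟪w, z i⟫| ≤ ε) (β : ι → ℝ) : ⟪w, ∑ i, β i • z i⟫ ≤ (∑ i, |β i|) * ε := by
  rw [inner_sum, Finset.sum_mul]
  refine Finset.sum_le_sum fun i _ => ?_
  calc ⟪w, β i • z i⟫ = β i * ⟪w, z i⟫ := real_inner_smul_right _ _ _
    _ ≤ |β i| * |⟪w, z i⟫| := by rw [← abs_mul]; exact le_abs_self _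
    _ ≤ |β i| * ε := mul_le_mul_of_nonneg_left (hz i) (abs_nonneg _)

theorem inner_sub_inner_smul_self (u w : E) :
    ⟪w, w - ⟪u, w⟫ • u⟫ = ‖w‖ ^ 2 - ⟪u, w⟫ ^ 2 := by
  rw [inner_sub_right, real_inner_smul_right, real_inner_self_eq_norm_sq, real_inner_comm]
  ring

theorem norm_sub_inner_smul_sq_of_norm_eq_one {u : E} (hu : ‖u‖ = 1) (w : E) :
    ‖w - ⟪u, w⟫ • u‖ ^ 2 = ‖w‖ ^ 2 - ⟪u, w⟫ ^ 2 := by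
  have horth : ⟪u, w - ⟪u, w⟫ • u⟫ = 0 := by
    rw [← mem_orthogonal_singleton_iff_inner_right, ← starProjection_unit_singleton ℝ hu]
    exact sub_starProjection_mem_orthogonal w
  rw [← real_inner_self_eq_norm_sq, inner_sub_left, inner_sub_inner_smul_self,
    real_inner_smul_left, horth, mul_zero, sub_zero]

theorem one_sub_inner_sq_le {w u : E} {z : ι → E} {ε σ : ℝ} (hε : 0 ≤ ε) (hσ₀ : 0 < σ)
    (hw : ‖w‖ = 1) (hu : ‖u‖ = 1) (hz : ∀ i, |⟪w, z i⟫| ≤ ε)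
    (hσ : ∀ β : EuclideanSpace ℝ ι, σ * ‖β‖ ≤ ‖∑ i, β i • z i‖)
    (hmem : w - ⟪u, w⟫ • u ∈ span ℝ (Set.range z)) :
    1 - ⟪u, w⟫ ^ 2 ≤ √(Fintype.card ι) * ε / σ := by
  obtain ⟨β, hβ⟩ := (mem_span_range_iff_exists_fun ℝ).mp hmem
  set b : EuclideanSpace ℝ ι := WithLp.toLp 2 β
  have hv : ‖w - ⟪u, w⟫ • u‖ ≤ 1 := by
    rw [← sq_le_one_iff₀ (norm_nonneg _), norm_sub_inner_smul_sq_of_norm_eq_one hu, hw]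
    nlinarith [sq_nonneg ⟪u, w⟫]
  have hb : ‖b‖ ≤ 1 / σ := by
    rw [le_div_iff₀ hσ₀, mul_comm]
    exact (hσ b).trans (hβ ▸ hv)
  calc 1 - ⟪u, w⟫ ^ 2 = ⟪w, ∑ i, β i • z i⟫ := by
        rw [hβ, inner_sub_inner_smul_self, hw, one_pow]
    _ ≤ (∑ i, |b i|) * ε := inner_sum_smul_le_sum_abs_mul hz β
    _ ≤ (√(Fintype.card ι) * (1 / σ)) * ε := by
        gcongr
        exact (EuclideanSpace.sum_abs_le_sqrt_card_mul_norm b).trans (by gcongr)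
    _ = √(Fintype.card ι) * ε / σ := by ring

end

theorem stmt14 {d : ℕ} (wstar what : EuclideanSpace ℝ (Fin d))
    (z : Fin (d - 1) → EuclideanSpace ℝ (Fin d))
    (εbar σ : ℝ) (hεbar : 0 ≤ εbar) (hσpos : 0 < σ)
    (hwstar : ‖wstar‖ = 1) (hwhat : ‖what‖ = 1)
    (hz : ∀ i, |⟪wstar, z i⟫| ≤ εbar)
    (horth : ∀ i, ⟪z i, what⟫ = 0)
    (hσ : ∀ β : EuclideanSpace ℝ (Fin (d - 1)), σ * ‖β‖ ≤ ‖∑ i, β i • z i‖) :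
    ⟪wstar, what⟫ ^ 2 ≥ 1 - Real.sqrt d * εbar / σ := by
  have hd : 1 ≤ d := Nat.one_le_iff_ne_zero.mpr fun h => by
    subst h
    simp [Subsingleton.elim wstar 0] at hwstar
  have hspan := span_range_eq_orthogonal_span_singleton
    (linearIndependent_of_mul_norm_le_norm_sum hσpos hσ)
    (by rw [Fintype.card_fin, finrank_euclideanSpace_fin]; omega)
    (by rintro rfl; simp at hwhat) horth
  have hmem : wstar - ⟪what, wstar⟫ • what ∈ span ℝ (Set.range z) := by
    rw [hspan, ← starProjection_unit_singleton ℝ hwhat]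
    exact sub_starProjection_mem_orthogonal wstar
  have hcard : √(Fintype.card (Fin (d - 1))) ≤ √d := by
    rw [Fintype.card_fin]
    gcongr
    exact Nat.sub_le d 1
  calc 1 - √d * εbar / σ ≤ 1 - √(Fintype.card (Fin (d - 1))) * εbar / σ := by gcongr
    _ ≤ ⟪what, wstar⟫ ^ 2 := by
      linarith [one_sub_inner_sq_le hεbar hσpos hwstar hwhat hz hσ hmem]
    _ = ⟪wstar, what⟫ ^ 2 := by rw [real_inner_comm]
end
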